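/- Fix d ≥ 1 and D = {0,…,d}. Let A ∈ ℝ^{4×3} with no forbidden pattern. Then A is universally connected: for every b ∈ ℝ^4, the graph on {x ∈ D^3 : Ax ≥ b} with edges between solutions at Hamming distance 1 is connected. -/

import Mathlib

open Matrix Finset
open scoped Classical

/-- `A` has a forbidden pattern: there are `lam ≥ 1` rows and columns, with
orderings (injective enumerations) `r`, `c`, such that in column `c l` all rows
of the pattern other than `r l`, `r (l+1)` vanish (cyclically), and
`A (r l) (c l) * A (r (l+1)) (c l) < 0` for every `l`. -/
def HasFP {m n : ℕ} (A : Matrix (Fin m) (Fin n) ℝ) : Prop :=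
  ∃ lam : ℕ, ∃ r : Fin (lam + 1) → Fin m, ∃ c : Fin (lam + 1) → Fin n,
    Function.Injective r ∧ Function.Injective c ∧
    (∀ l k : Fin (lam + 1), k ≠ l → k ≠ l + 1 → A (r k) (c l) = 0) ∧
    (∀ l : Fin (lam + 1), A (r l) (c l) * A (r (l + 1)) (c l) < 0)

/-- `A`, restricted to the set `S` of remaining columns, can be eliminated at column `j`. -/
def CanElim {m n : ℕ} (A : Matrix (Fin m) (Fin n) ℝ) (S : Finset (Fin n)) (j : Fin n) : Prop :=
  (∀ i, 0 < A i j → ∀ j' ∈ S, j' ≠ j → A i j' = 0) ∨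
  (∀ i, A i j < 0 → ∀ j' ∈ S, j' ≠ j → A i j' = 0)

/-- `A` has an elimination ordering. -/
def HasEO {m n : ℕ} (A : Matrix (Fin m) (Fin n) ℝ) : Prop :=
  ∃ e : Fin n ≃ Fin n, ∀ t : Fin n,
    CanElim A (Finset.univ.filter fun c => ∀ s : Fin n, s < t → e s ≠ c) (e t)

/-- `x ∈ {0,…,d}ⁿ` is a feasible solution of the integer linear system `A x ≥ b`. -/
def Feas {m n : ℕ} (d : ℕ) (A : Matrix (Fin m) (Fin n) ℝ) (b : Fin m → ℝ)
    (x : Fin n → ℕ) : Prop :=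
  (∀ j, x j ≤ d) ∧ ∀ i, b i ≤ ∑ j, A i j * (x j : ℝ)

/-- Adjacency in the solution graph `G(A,b)`: both endpoints are feasible and
their Hamming distance is `1`. -/
def SGAdj {m n : ℕ} (d : ℕ) (A : Matrix (Fin m) (Fin n) ℝ) (b : Fin m → ℝ)
    (x y : Fin n → ℕ) : Prop :=
  Feas d A b x ∧ Feas d A b y ∧ hammingDist x y = 1

/-- The solution graph `G(A,b)` is connected. -/
def SGConn {m n : ℕ} (d : ℕ) (A : Matrix (Fin m) (Fin n) ℝ) (b : Fin m → ℝ) : Prop :=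
  ∀ x y : Fin n → ℕ, Feas d A b x → Feas d A b y →
    Relation.ReflTransGen (SGAdj d A b) x y

/-- `A` is universally connected. -/
def UnivConn {m n : ℕ} (d : ℕ) (A : Matrix (Fin m) (Fin n) ℝ) : Prop :=
  ∀ b : Fin m → ℝ, SGConn d A b

/-!
If some column `j` can be eliminated, i.e. all rows that are positive (or all that are negative)
at `j` vanish on the other columns, then between two feasible points the `j`-coordinate of one of
them can be moved to the value of the other without leaving the feasible set, and induction on the
remaining columns connects them. Without a forbidden pattern every pair of columns contains such a
column, so this settles the case where the whole matrix has one.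

Otherwise every column `j` is obstructed by two rows of opposite sign at `j` that both reach other
columns. Among four rows the three obstructing pairs form a star, a triangle or a path. The first
two produce forbidden patterns; a path `a - b - c - d` forces a pivot column `j` such that rows
negative at `j` live on `{j, k}` and rows positive at `j` live on `{j, l}`, and then two solutions
are joined by moving `k`, raising `j`, and moving `l`, in this order.
-/

open Function

lemma Fin.three_eq_of_ne {j k l c : Fin 3} (hjk : j ≠ k) (hjl : j ≠ l) (hkl : k ≠ l)
    (hcj : c ≠ j) (hck : c ≠ k) : c = l := by
  omega

lemma Fin.eq_or_eq_or_eq_or_eq {a b c d : Fin 4} (hab : a ≠ b) (hac : a ≠ c) (had : a ≠ d)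
    (hbc : b ≠ c) (hbd : b ≠ d) (hcd : c ≠ d) (i : Fin 4) : i = a ∨ i = b ∨ i = c ∨ i = d := by
  omega

section SolutionGraph

variable {m n d : ℕ} {A : Matrix (Fin m) (Fin n) ℝ} {b : Fin m → ℝ}

instance : Std.Symm (SGAdj d A b) where
  symm _ _ h := ⟨h.2.1, h.1, by rw [hammingDist_comm, h.2.2]⟩

lemma sum_mul_update (a : Fin n → ℝ) (z : Fin n → ℕ) (j : Fin n) (v : ℕ) :
    ∑ k, a k * (update z j v k : ℝ) = ∑ k, a k * (z k : ℝ) + a j * ((v : ℝ) - z j) := by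
  rw [← add_sum_erase _ _ (mem_univ j), ← add_sum_erase _ _ (mem_univ j), update_self,
    sum_congr rfl fun k hk => by rw [update_of_ne (ne_of_mem_erase hk)]]
  ring

lemma feas_update_iff {z : Fin n → ℕ} {j : Fin n} {v : ℕ} (hz : ∀ k, z k ≤ d) :
    Feas d A b (update z j v) ↔
      v ≤ d ∧ ∀ i, b i ≤ ∑ k, A i k * (z k : ℝ) + A i j * ((v : ℝ) - z j) := by
  simp only [Feas, sum_mul_update, forall_update_iff _ fun _ w => w ≤ d]
  exact and_congr_left' (and_iff_left fun k _ => hz k)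

lemma feas_update_of_mem_uIcc {z : Fin n → ℕ} {j : Fin n} {t v : ℕ} (hz : Feas d A b z)
    (ht : Feas d A b (update z j t)) (hv : v ∈ Set.uIcc (z j) t) : Feas d A b (update z j v) := by
  rw [feas_update_iff hz.1] at ht ⊢
  have hv' : ((z j : ℕ) : ℝ) ≤ v ∧ (v : ℝ) ≤ t ∨ (t : ℝ) ≤ v ∧ (v : ℝ) ≤ z j := by
    rcases Set.mem_uIcc.1 hv with h | h <;> [left; right] <;> exact_mod_cast h
  refine ⟨?_, fun i => ?_⟩
  · have := hz.1 j
    have := ht.1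
    rcases Set.mem_uIcc.1 hv with h | h <;> omega
  · rcases hv' with ⟨h1, h2⟩ | ⟨h1, h2⟩ <;> rcases le_total 0 (A i j) with ha | ha <;>
      nlinarith [hz.2 i, ht.2 i]

lemma reflTransGen_update_of_forall_mem_Icc {x : Fin n → ℕ} {j : Fin n} {s t : ℕ} (hst : s ≤ t)
    (H : ∀ v ∈ Set.Icc s t, Feas d A b (update x j v)) :
    Relation.ReflTransGen (SGAdj d A b) (update x j s) (update x j t) := by
  induction t, hst using Nat.le_induction with
  | base => rfl
  | succ t hst ih =>
    refine (ih fun v hv => H v ⟨hv.1, hv.2.trans t.le_succ⟩).tail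
      ⟨H t ⟨hst, t.le_succ⟩, H (t + 1) ⟨hst.trans t.le_succ, le_rfl⟩, ?_⟩
    rw [hammingDist, show (univ.filter fun k => update x j t k ≠ update x j (t + 1) k) = {j} by
      ext k; rcases eq_or_ne k j with rfl | hk <;> simp [*]]
    rfl

lemma reflTransGen_update {z : Fin n → ℕ} {j : Fin n} {t : ℕ} (hz : Feas d A b z)
    (ht : Feas d A b (update z j t)) :
    Relation.ReflTransGen (SGAdj d A b) z (update z j t) := by
  have H : ∀ v ∈ Set.uIcc (z j) t, Feas d A b (update z j v) :=
    fun v hv => feas_update_of_mem_uIcc hz ht hv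
  rcases le_total (z j) t with h | h
  · simpa using reflTransGen_update_of_forall_mem_Icc h fun v hv => H v (Set.Icc_subset_uIcc hv)
  · exact symm <| by
      simpa using reflTransGen_update_of_forall_mem_Icc h fun v hv => H v (Set.Icc_subset_uIcc' hv)

end SolutionGraph

section Elimination

variable {m n d : ℕ} {A : Matrix (Fin m) (Fin n) ℝ} {b : Fin m → ℝ}

lemma CanElim.mono {S T : Finset (Fin n)} {j : Fin n} (h : CanElim A S j) (hT : T ⊆ S) :
    CanElim A T j :=
  h.imp (fun H i hi k hk => H i hi k (hT hk)) (fun H i hi k hk => H i hi k (hT hk))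

/-- Only rows whose value drops can become violated; they see no other coordinate of `S`, and off
`S` the two points agree, so such a row takes the same value as at `w`. -/
lemma feas_update_of_rows_eq_zero {S : Finset (Fin n)} {j : Fin n} {z w : Fin n → ℕ}
    (hz : Feas d A b z) (hw : Feas d A b w) (hzw : ∀ k ∉ S, z k = w k)
    (hrows : ∀ i, A i j * ((w j : ℝ) - z j) < 0 → ∀ k ∈ S, k ≠ j → A i k = 0) :
    Feas d A b (update z j (w j)) := by
  refine (feas_update_iff hz.1).2 ⟨hw.1 j, fun i => ?_⟩
  by_cases hi : A i j * ((w j : ℝ) - z j) < 0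
  · have hsum : ∑ k, A i k * (update z j (w j) k : ℝ) = ∑ k, A i k * (w k : ℝ) := by
      refine sum_congr rfl fun k _ => ?_
      rcases eq_or_ne k j with rfl | hkj
      · rw [update_self]
      · by_cases hkS : k ∈ S
        · simp [hrows i hi k hkS hkj]
        · rw [update_of_ne hkj, hzw k hkS]
    linarith [sum_mul_update (A i) z j (w j), hw.2 i]
  · linarith [hz.2 i, not_lt.1 hi]

lemma feas_update_or_of_canElim {S : Finset (Fin n)} {j : Fin n} {x y : Fin n → ℕ}
    (hS : CanElim A S j) (hx : Feas d A b x) (hy : Feas d A b y) (hxy : ∀ k ∉ S, x k = y k) :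
    Feas d A b (update y j (x j)) ∨ Feas d A b (update x j (y j)) := by
  have hyx : ∀ k ∉ S, y k = x k := fun k hk => (hxy k hk).symm
  rcases le_total (x j) (y j) with hle | hle <;>
    have hle' := Nat.cast_le (α := ℝ).2 hle <;>
    rcases hS with hP | hN
  · exact .inl <| feas_update_of_rows_eq_zero hy hx hyx fun i hi =>
      hP i (pos_of_mul_neg_left hi (by linarith))
  · exact .inr <| feas_update_of_rows_eq_zero hx hy hxy fun i hi =>
      hN i (neg_of_mul_neg_left hi (by linarith))
  · exact .inr <| feas_update_of_rows_eq_zero hx hy hxy fun i hi =>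
      hP i (pos_of_mul_neg_left hi (by linarith))
  · exact .inl <| feas_update_of_rows_eq_zero hy hx hyx fun i hi =>
      hN i (neg_of_mul_neg_left hi (by linarith))

lemma forall_notMem_erase_eq_update {S : Finset (Fin n)} {j : Fin n} {x y : Fin n → ℕ}
    (hxy : ∀ k ∉ S, x k = y k) : ∀ k ∉ S.erase j, x k = update y j (x j) k := by
  intro k hk
  rcases eq_or_ne k j with rfl | hkj
  · rw [update_self]
  · rw [update_of_ne hkj]
    exact hxy k fun hkS => hk (mem_erase.2 ⟨hkj, hkS⟩)

lemma reflTransGen_of_canElim {S : Finset (Fin n)}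
    (hS : ∀ T ⊆ S, T.Nonempty → ∃ j ∈ T, CanElim A T j) {x y : Fin n → ℕ}
    (hx : Feas d A b x) (hy : Feas d A b y) (hxy : ∀ k ∉ S, x k = y k) :
    Relation.ReflTransGen (SGAdj d A b) x y := by
  induction S using Finset.strongInduction generalizing x y with
  | H S ih =>
  rcases S.eq_empty_or_nonempty with rfl | hne
  · rw [funext fun k => hxy k (notMem_empty k)]
  obtain ⟨j, hjS, hj⟩ := hS S Subset.rfl hne
  have hS' : ∀ T ⊆ S.erase j, T.Nonempty → ∃ k ∈ T, CanElim A T k :=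
    fun T hT => hS T (hT.trans (erase_subset j S))
  rcases feas_update_or_of_canElim hj hx hy hxy with h | h
  · exact (ih _ (erase_ssubset hjS) hS' hx h (forall_notMem_erase_eq_update hxy)).trans
      (symm (reflTransGen_update hy h))
  · exact (reflTransGen_update hx h).trans <| symm <|
      ih _ (erase_ssubset hjS) hS' hy h (forall_notMem_erase_eq_update fun k hk => (hxy k hk).symm)

lemma univConn_of_canElim (h : ∀ T : Finset (Fin n), T.Nonempty → ∃ j ∈ T, CanElim A T j) :
    UnivConn d A :=
  fun _ _ _ hx hy => reflTransGen_of_canElim (S := univ) (fun T _ => h T) hx hy (by simp)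

end Elimination

section SignSplit

variable {m d : ℕ} {A : Matrix (Fin m) (Fin 3) ℝ} {b : Fin m → ℝ}

def SignSplit (A : Matrix (Fin m) (Fin 3) ℝ) (j k l : Fin 3) : Prop :=
  ∀ i, (A i j < 0 ∧ A i l = 0) ∨ (0 < A i j ∧ A i k = 0)

def HasSignSplit (A : Matrix (Fin m) (Fin 3) ℝ) : Prop :=
  ∃ j k l, j ≠ k ∧ j ≠ l ∧ k ≠ l ∧ SignSplit A j k l

/-- Rows negative at the pivot `j` do not see `l` and rows positive at `j` do not see `k`; so move
`k` while the pivot is still low, then raise the pivot, and move `l` last. -/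
lemma reflTransGen_of_signSplit {j k l : Fin 3} (hjk : j ≠ k) (hjl : j ≠ l) (hkl : k ≠ l)
    (hA : SignSplit A j k l) {x y : Fin 3 → ℕ} (hx : Feas d A b x) (hy : Feas d A b y)
    (hxy : x j ≤ y j) : Relation.ReflTransGen (SGAdj d A b) x y := by
  set x₁ := update x k (y k)
  set x₂ := update x₁ j (y j)
  have hx₂y : update x₂ l (y l) = y := by
    funext c
    rcases eq_or_ne c l with rfl | hcl
    · rw [update_self]
    rcases eq_or_ne c j with rfl | hcj
    · simp [x₂, hcl]
    rcases eq_or_ne c k with rfl | hck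
    · simp [x₂, x₁, hcl, hcj]
    exact absurd (Fin.three_eq_of_ne hjk hjl hkl hcj hck) hcl
  have hrow : ∀ i, ∑ c, A i c * (y c : ℝ) = ∑ c, A i c * (x c : ℝ) + A i k * ((y k : ℝ) - x k) +
      A i j * ((y j : ℝ) - x j) + A i l * ((y l : ℝ) - x l) := fun i => by
    conv_lhs => rw [← hx₂y]
    simp only [x₂, x₁, sum_mul_update, update_of_ne hjk, update_of_ne hkl.symm,
      update_of_ne hjl.symm]
  have hxy' : 0 ≤ (y j : ℝ) - x j := sub_nonneg.2 (Nat.cast_le.2 hxy)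
  have hx₁ : Feas d A b x₁ := by
    refine (feas_update_iff hx.1).2 ⟨hy.1 k, fun i => ?_⟩
    rcases hA i with ⟨hneg, hzero⟩ | ⟨-, hzero⟩
    · nlinarith [hy.2 i, hrow i]
    · simpa [hzero] using hx.2 i
  have hx₂ : Feas d A b x₂ := by
    refine (feas_update_iff hx₁.1).2 ⟨hy.1 j, fun i => ?_⟩
    simp only [x₁, sum_mul_update, update_of_ne hjk]
    rcases hA i with ⟨-, hzero⟩ | ⟨hpos, hzero⟩
    · nlinarith [hy.2 i, hrow i]
    · nlinarith [hx.2 i]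
  have hx₂y' := reflTransGen_update (j := l) (t := y l) hx₂ (by rwa [hx₂y])
  rw [hx₂y] at hx₂y'
  exact (reflTransGen_update hx hx₁).trans <| (reflTransGen_update hx₁ hx₂).trans hx₂y'

lemma univConn_of_hasSignSplit (hA : HasSignSplit A) : UnivConn d A := by
  obtain ⟨j, k, l, hjk, hjl, hkl, hA⟩ := hA
  intro b x y hx hy
  rcases le_total (x j) (y j) with hxy | hyx
  · exact reflTransGen_of_signSplit hjk hjl hkl hA hx hy hxy
  · exact symm (reflTransGen_of_signSplit hjk hjl hkl hA hy hx hyx)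

end SignSplit

section ForbiddenPattern

variable {m n : ℕ} {A : Matrix (Fin m) (Fin n) ℝ}

def OppositeIn (A : Matrix (Fin m) (Fin n) ℝ) (j : Fin n) (u v : Fin m) : Prop :=
  A u j * A v j < 0

namespace OppositeIn

variable {j : Fin n} {u v w : Fin m}

lemma symm (h : OppositeIn A j u v) : OppositeIn A j v u := by
  rwa [OppositeIn, mul_comm]

lemma ne (h : OppositeIn A j u v) : u ≠ v := by
  rintro rfl
  exact (mul_self_nonneg _).not_gt h

lemma right_ne_zero (h : OppositeIn A j u v) : A v j ≠ 0 :=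
  right_ne_zero_of_mul (ne_of_lt h)

lemma or_of_ne_zero (h : OppositeIn A j u v) (hw : A w j ≠ 0) :
    OppositeIn A j w u ∨ OppositeIn A j w v := by
  by_contra hc
  simp only [OppositeIn, not_or, not_lt] at hc
  unfold OppositeIn at h
  nlinarith [mul_self_pos.2 hw, mul_nonneg hc.1 hc.2]

end OppositeIn

variable {j k l : Fin n} {u v w : Fin m}

lemma injective_triple_of_ne {α : Type*} {a b c : α} (hab : a ≠ b) (hac : a ≠ c) (hbc : b ≠ c) :
    Injective ![a, b, c] := by
  rw [Matrix.vecCons, Fin.cons_injective_iff]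
  simp [hab, hac, hbc, Set.range, Fin.exists_fin_two, eq_comm]

lemma eq_of_oppositeIn_of_oppositeIn (h : ¬HasFP A) (hj : OppositeIn A j u v)
    (hk : OppositeIn A k u v) : j = k := by
  by_contra hjk
  refine h ⟨1, ![u, v], ![j, k], injective_pair_iff_ne.2 hj.ne, injective_pair_iff_ne.2 hjk,
    fun p q _ _ => by fin_cases p <;> fin_cases q <;> simp_all, fun p => ?_⟩
  fin_cases p
  exacts [hj, hk.symm]

lemma apply_eq_zero_of_oppositeIn (h : ¬HasFP A) (huv : OppositeIn A j u v)
    (hwu : OppositeIn A k w u) (hwv : OppositeIn A l w v) (hjk : j ≠ k) (hjl : j ≠ l) :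
    A w j = 0 := by
  by_contra hw
  rcases huv.or_of_ne_zero hw with h' | h'
  exacts [hjk (eq_of_oppositeIn_of_oppositeIn h h' hwu),
    hjl (eq_of_oppositeIn_of_oppositeIn h h' hwv)]

lemma oppositeIn_of_ne_zero (h : ¬HasFP A) (huv : OppositeIn A j u v) (huw : OppositeIn A k u w)
    (hjk : j ≠ k) (hv : A v k ≠ 0) : OppositeIn A k v w :=
  (huw.or_of_ne_zero hv).resolve_left fun hvu =>
    hjk (eq_of_oppositeIn_of_oppositeIn h huv hvu.symm)

lemma not_oppositeIn_cycle (h : ¬HasFP A) (hjk : j ≠ k) (hjl : j ≠ l) (hkl : k ≠ l)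
    (huv : OppositeIn A j u v) (hvw : OppositeIn A k v w) (hwu : OppositeIn A l w u) : False := by
  have hw : A w j = 0 := apply_eq_zero_of_oppositeIn h huv hwu hvw.symm hjl hjk
  have hu : A u k = 0 := apply_eq_zero_of_oppositeIn h hvw huv hwu.symm hjk.symm hkl
  have hv : A v l = 0 := apply_eq_zero_of_oppositeIn h hwu hvw huv.symm hkl.symm hjl.symm
  refine h ⟨2, ![u, v, w], ![j, k, l],
    injective_triple_of_ne huv.ne hwu.ne.symm hvw.ne, injective_triple_of_ne hjk hjl hkl,
    fun p q _ _ => ?_, fun p => ?_⟩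
  · fin_cases p <;> fin_cases q <;> simp_all
  · fin_cases p
    exacts [huv, hvw, hwu]

/-- Each leaf is opposite, in its second column, to the leaf owning that column; following these
arrows closes a cycle of length two or three. -/
lemma false_of_star (h : ¬HasFP A) (hjk : j ≠ k) (hjl : j ≠ l) (hkl : k ≠ l) {x u v w : Fin m}
    (hu : OppositeIn A j x u) (hv : OppositeIn A k x v)
    (hw : OppositeIn A l x w) (hu' : A u k ≠ 0 ∨ A u l ≠ 0) (hv' : A v j ≠ 0 ∨ A v l ≠ 0)
    (hw' : A w j ≠ 0 ∨ A w k ≠ 0) : False := by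
  have double := fun {j' k' : Fin n} {r s : Fin m} (hj' : OppositeIn A j' r s)
    (hk' : OppositeIn A k' s r) => eq_of_oppositeIn_of_oppositeIn h hj' hk'.symm
  rcases hu'.imp (oppositeIn_of_ne_zero h hu hv hjk) (oppositeIn_of_ne_zero h hu hw hjl) with
    huv | huw <;>
  rcases hv'.imp (oppositeIn_of_ne_zero h hv hu hjk.symm) (oppositeIn_of_ne_zero h hv hw hkl) with
    hvu | hvw <;>
  rcases hw'.imp (oppositeIn_of_ne_zero h hw hu hjl.symm) (oppositeIn_of_ne_zero h hw hv hkl.symm)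
    with hwu | hwv
  · exact hjk (double hvu huv)
  · exact hjk (double hvu huv)
  · exact not_oppositeIn_cycle h hkl hjk.symm hjl.symm huv hvw hwu
  · exact hkl (double hvw hwv).symm
  · exact hjl (double hwu huw)
  · exact not_oppositeIn_cycle h hkl.symm hjl.symm hjk.symm huw hwv hvu
  · exact hjl (double hwu huw)
  · exact hkl (double hvw hwv).symm

lemma path_end_eq_zero (h : ¬HasFP A) (hjk : j ≠ k) (hjl : j ≠ l) (hkl : k ≠ l) {a b c d : Fin m}
    (hab : OppositeIn A j a b) (hbc : OppositeIn A k b c)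
    (hcd : OppositeIn A l c d) (hd : A d j ≠ 0 ∨ A d k ≠ 0) : A a l = 0 := by
  by_contra ha
  rcases hcd.or_of_ne_zero ha with hac | had
  · exact not_oppositeIn_cycle h hjk hjl hkl hab hbc hac.symm
  rcases hd with hd | hd
  · exact not_oppositeIn_cycle h hjk hjl hkl (oppositeIn_of_ne_zero h had hab hjl.symm hd) hbc hcd
  · exact not_oppositeIn_cycle h hjk hjl hkl hab
      (oppositeIn_of_ne_zero h hcd hbc.symm hkl.symm hd).symm had.symm

end ForbiddenPattern

section Obstruction

variable {m n : ℕ} {A : Matrix (Fin m) (Fin n) ℝ}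

def ElimObstruction (A : Matrix (Fin m) (Fin n) ℝ) (S : Finset (Fin n)) (j : Fin n)
    (u v : Fin m) : Prop :=
  OppositeIn A j u v ∧ (∃ k ∈ S, k ≠ j ∧ A u k ≠ 0) ∧ (∃ k ∈ S, k ≠ j ∧ A v k ≠ 0)

variable {S : Finset (Fin n)} {j k l : Fin n} {u v w : Fin m}

lemma ElimObstruction.symm (h : ElimObstruction A S j u v) : ElimObstruction A S j v u :=
  ⟨h.1.symm, h.2.2, h.2.1⟩

lemma exists_elimObstruction (h : ¬CanElim A S j) : ∃ u v, ElimObstruction A S j u v := by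
  simp only [CanElim, not_or, not_forall, exists_prop] at h
  obtain ⟨⟨u, hu, k, hk, hkj, huk⟩, ⟨v, hv, k', hk', hk'j, hvk'⟩⟩ := h
  exact ⟨u, v, mul_neg_of_pos_of_neg hu hv, ⟨k, hk, hkj, huk⟩, ⟨k', hk', hk'j, hvk'⟩⟩

lemma ElimObstruction.pair (h : ElimObstruction A {j, k} j u v) :
    OppositeIn A j u v ∧ A u k ≠ 0 ∧ A v k ≠ 0 := by
  obtain ⟨huv, ⟨e, he, hej, hu⟩, ⟨e', he', he'j, hv⟩⟩ := h
  rw [mem_insert, mem_singleton] at he he'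
  exact ⟨huv, he.resolve_left hej ▸ hu, he'.resolve_left he'j ▸ hv⟩

lemma canElim_pair (h : ¬HasFP A) (hjk : j ≠ k) : CanElim A {j, k} j ∨ CanElim A {j, k} k := by
  by_contra hne
  obtain ⟨hj, hk⟩ := not_or.1 hne
  obtain ⟨u, v, huvj⟩ := exists_elimObstruction hj
  obtain ⟨u', v', huvk⟩ := exists_elimObstruction hk
  rw [pair_comm] at huvk
  obtain ⟨huv, hu, hv⟩ := huvj.pair
  obtain ⟨huv', hu', hv'⟩ := huvk.pair
  -- `u` and `v` have the same sign at `k`, so a row opposite to `u` at `k` is opposite to both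
  have key : ∀ {w}, OppositeIn A k u w → A w j ≠ 0 → False := fun huw hw =>
    hw <| apply_eq_zero_of_oppositeIn h huv huw.symm
      (oppositeIn_of_ne_zero h huv huw hjk hv).symm hjk hjk
  rcases huv'.or_of_ne_zero hu with h' | h'
  exacts [key h' hu', key h' hv']

lemma exists_canElim_of_card_le_two (h : ¬HasFP A) {T : Finset (Fin n)} (hT : T.card ≤ 2)
    (hne : T.Nonempty) : ∃ j ∈ T, CanElim A T j := by
  interval_cases hc : T.card
  · exact absurd (card_eq_zero.1 hc) hne.ne_empty
  · obtain ⟨j, rfl⟩ := card_eq_one.1 hc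
    exact ⟨j, mem_singleton_self j, .inl fun _ _ k hk hkj => absurd (mem_singleton.1 hk) hkj⟩
  · obtain ⟨j, k, hjk, rfl⟩ := card_eq_two.1 hc
    rcases canElim_pair h hjk with hj | hk
    exacts [⟨j, by simp, hj⟩, ⟨k, by simp, hk⟩]

lemma exists_canElim_of_canElim_univ {A : Matrix (Fin m) (Fin 3) ℝ} (h : ¬HasFP A) {j : Fin 3}
    (hj : CanElim A univ j) {T : Finset (Fin 3)} (hne : T.Nonempty) : ∃ j ∈ T, CanElim A T j := by
  by_cases hjT : j ∈ T
  · exact ⟨j, hjT, hj.mono (subset_univ T)⟩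
  · refine exists_canElim_of_card_le_two h ?_ hne
    calc T.card ≤ (univ.erase j).card := card_le_card (subset_erase.2 ⟨subset_univ T, hjT⟩)
      _ = 2 := by simp

lemma ElimObstruction.ne_zero_or_ne_zero {A : Matrix (Fin m) (Fin 3) ℝ} {S : Finset (Fin 3)}
    {j k l : Fin 3} (h : ElimObstruction A S j u v) (hjk : j ≠ k) (hjl : j ≠ l) (hkl : k ≠ l) :
    A v k ≠ 0 ∨ A v l ≠ 0 := by
  obtain ⟨c, -, hcj, hc⟩ := h.2.2
  rcases eq_or_ne c k with rfl | hck
  · exact .inl hc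
  · exact .inr (Fin.three_eq_of_ne hjk hjl hkl hcj hck ▸ hc)

end Obstruction

section FourByThree

variable {A : Matrix (Fin 4) (Fin 3) ℝ} {j k l : Fin 3}

lemma hasSignSplit_of_path (h : ¬HasFP A) (hjk : j ≠ k) (hjl : j ≠ l) (hkl : k ≠ l)
    {a b c d : Fin 4} (hab : OppositeIn A j a b) (hbc : OppositeIn A k b c)
    (hcd : OppositeIn A l c d) (ha : A a k ≠ 0 ∨ A a l ≠ 0) (hd : A d j ≠ 0 ∨ A d k ≠ 0) :
    HasSignSplit A := by
  have hal : A a l = 0 := path_end_eq_zero h hjk hjl hkl hab hbc hcd hd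
  have hdj : A d j = 0 :=
    path_end_eq_zero h hkl.symm hjl.symm hjk.symm hcd.symm hbc.symm hab.symm ha.symm
  have hac : OppositeIn A k a c :=
    oppositeIn_of_ne_zero h hab.symm hbc hjk (ha.resolve_right (not_not.2 hal))
  have hdb : OppositeIn A k d b :=
    oppositeIn_of_ne_zero h hcd hbc.symm hkl.symm (hd.resolve_left (not_not.2 hdj))
  have hcj : A c j = 0 := apply_eq_zero_of_oppositeIn h hab hac.symm hbc.symm hjk hjk
  have hbl : A b l = 0 := apply_eq_zero_of_oppositeIn h hcd hbc hdb.symm hkl.symm hkl.symm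
  have had : a ≠ d := fun had => hcd.right_ne_zero (had ▸ hal)
  have cover := Fin.eq_or_eq_or_eq_or_eq hab.ne hac.ne had hbc.ne hdb.ne.symm hcd.ne
  rcases lt_or_gt_of_ne hbc.symm.right_ne_zero with hb | hb
  · have hc := pos_of_mul_neg_right hbc hb.le
    have ha := neg_of_mul_neg_left hac hc.le
    have hd := pos_of_mul_neg_left hdb hb.le
    refine ⟨k, j, l, hjk.symm, hkl, hjl, fun i => ?_⟩
    rcases cover i with rfl | rfl | rfl | rfl
    exacts [.inl ⟨ha, hal⟩, .inl ⟨hb, hbl⟩, .inr ⟨hc, hcj⟩, .inr ⟨hd, hdj⟩]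
  · have hc := neg_of_mul_neg_right hbc hb.le
    have ha := pos_of_mul_neg_left hac hc.le
    have hd := neg_of_mul_neg_left hdb hb.le
    refine ⟨k, l, j, hkl, hjk.symm, hjl.symm, fun i => ?_⟩
    rcases cover i with rfl | rfl | rfl | rfl
    exacts [.inr ⟨ha, hal⟩, .inr ⟨hb, hbl⟩, .inl ⟨hc, hcj⟩, .inl ⟨hd, hdj⟩]

lemma hasSignSplit_of_shared (h : ¬HasFP A) (hjk : j ≠ k) (hjl : j ≠ l) (hkl : k ≠ l)
    {x a b p q : Fin 4} (hxa : ElimObstruction A univ j x a) (hxb : ElimObstruction A univ k x b)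
    (hpq : ElimObstruction A univ l p q) : HasSignSplit A := by
  have ha := hxa.ne_zero_or_ne_zero hjk hjl hkl
  have hb := hxb.ne_zero_or_ne_zero hjk.symm hkl hjl
  have key : ∀ {p q}, ElimObstruction A univ l p q → p = x ∨ p = a ∨ p = b → HasSignSplit A := by
    intro p q hpq hp
    have hq := hpq.ne_zero_or_ne_zero hjl.symm hkl.symm hjk
    rcases hp with rfl | rfl | rfl
    · exact (false_of_star h hjk hjl hkl hxa.1 hxb.1 hpq.1 ha hb hq).elim
    · exact hasSignSplit_of_path h hjk.symm hkl hjl hxb.1.symm hxa.1 hpq.1 hb hq.symm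
    · exact hasSignSplit_of_path h hjk hjl hkl hxa.1.symm hxb.1 hpq.1 ha hq
  by_cases hp : p = x ∨ p = a ∨ p = b
  · exact key hpq hp
  by_cases hq : q = x ∨ q = a ∨ q = b
  · exact key hpq.symm hq
  push Not at hp hq
  exfalso
  have hab : a ≠ b := fun hab =>
    hjk (eq_of_oppositeIn_of_oppositeIn h hxa.1 (by rw [hab]; exact hxb.1))
  rcases Fin.eq_or_eq_or_eq_or_eq hxa.1.ne hxb.1.ne hq.1.symm hab hq.2.1.symm hq.2.2.symm p with
    h' | h' | h' | h'
  exacts [hp.1 h', hp.2.1 h', hp.2.2 h', hpq.1.ne h']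

lemma hasSignSplit_of_forall_not_canElim (h : ¬HasFP A) (hA : ∀ j, ¬CanElim A univ j) : HasSignSplit A := by
  obtain ⟨u₀, v₀, h₀⟩ := exists_elimObstruction (hA 0)
  obtain ⟨u₁, v₁, h₁⟩ := exists_elimObstruction (hA 1)
  obtain ⟨u₂, v₂, h₂⟩ := exists_elimObstruction (hA 2)
  have h01 : (0 : Fin 3) ≠ 1 := by decide
  have h02 : (0 : Fin 3) ≠ 2 := by decide
  have h12 : (1 : Fin 3) ≠ 2 := by decide
  -- if the pairs of columns `0` and `1` are disjoint, they exhaust the four rows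
  by_cases h₀₁ : u₀ = u₁ ∨ u₀ = v₁ ∨ v₀ = u₁ ∨ v₀ = v₁
  · rcases h₀₁ with rfl | rfl | rfl | rfl
    exacts [hasSignSplit_of_shared h h01 h02 h12 h₀ h₁ h₂,
      hasSignSplit_of_shared h h01 h02 h12 h₀ h₁.symm h₂,
      hasSignSplit_of_shared h h01 h02 h12 h₀.symm h₁ h₂,
      hasSignSplit_of_shared h h01 h02 h12 h₀.symm h₁.symm h₂]
  push Not at h₀₁
  rcases Fin.eq_or_eq_or_eq_or_eq h₀.1.ne h₀₁.1 h₀₁.2.1 h₀₁.2.2.1 h₀₁.2.2.2 h₁.1.ne u₂ with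
    rfl | rfl | rfl | rfl
  exacts [hasSignSplit_of_shared h h02 h01 h12.symm h₀ h₂ h₁,
    hasSignSplit_of_shared h h02 h01 h12.symm h₀.symm h₂ h₁,
    hasSignSplit_of_shared h h12 h01.symm h02.symm h₁ h₂ h₀,
    hasSignSplit_of_shared h h12 h01.symm h02.symm h₁.symm h₂ h₀]

end FourByThree

theorem stmt12_general (d : ℕ) (A : Matrix (Fin 4) (Fin 3) ℝ)
    (h : ¬ HasFP A) : UnivConn d A := by
  by_cases hE : ∃ j, CanElim A univ j
  · obtain ⟨j, hj⟩ := hE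
    exact univConn_of_canElim fun T hT => exists_canElim_of_canElim_univ h hj hT
  · exact univConn_of_hasSignSplit (hasSignSplit_of_forall_not_canElim h (not_exists.1 hE))

theorem stmt12 (d : ℕ) (hd : 1 ≤ d) (A : Matrix (Fin 4) (Fin 3) ℝ)
    (h : ¬ HasFP A) : UnivConn d A :=
  stmt12_general d A h
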